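/- arXiv:1404.7340 — 5 statements merged into one kernel-verified Lean document; each statement's English description precedes it below -/
import Mathlib

section
/- Let F : C₁ → C₂ be a functor, let (L₁, l₁) be a localization on C₁ and (L₂, l₂) a localization on C₂. Then F preserves equivalences if and only if there is a natural transformation α : F ∘ L₁ → L₂ ∘ F such that α_X ∘ F((l₁)_X) = (l₂)_{FX} for every object X and each α_X is an L₂-equivalence. When this holds, such α is unique, and α is a natural isomorphism if and only if F preserves local objects. -/
open CategoryTheory

/-- A localization (reflection) on a category `C`: a functor `L : C ⥤ C` with a natural
transformation `l : 𝟭 C ⟶ L` such that `L (l X) = l (L X)` and these morphisms are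
isomorphisms. -/
structure LocalizationData (C : Type*) [Category C] where
  /-- the localization functor -/
  L : C ⥤ C
  /-- the unit -/
  l : 𝟭 C ⟶ L
  coincide : ∀ X : C, L.map (l.app X) = l.app (L.obj X)
  isIso : ∀ X : C, IsIso (L.map (l.app X))

/-- An object `X` is `L`-local if `l X : X ⟶ L X` is an isomorphism. -/
def LocalizationData.IsLocal {C : Type*} [Category C] (Λ : LocalizationData C) (X : C) : Prop :=
  IsIso (Λ.l.app X)

/-- A morphism `g` is an `L`-equivalence if `L g` is an isomorphism. -/
def LocalizationData.IsEquiv {C : Type*} [Category C] (Λ : LocalizationData C)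
    {X Y : C} (g : X ⟶ Y) : Prop :=
  IsIso (Λ.L.map g)

/-!
Morphisms into an `L₂`-local object extend uniquely along `L₂`-equivalences, so a comparison `α`
is forced to be the extension of `l₂ (F X)` along `F (l₁ X)` into the local object `L₂ (F X)`.
By two-out-of-three, such an `α` has `L₂`-equivalences as components exactly when every
`F (l₁ X)` is an `L₂`-equivalence, which in turn is equivalent to `F` preserving equivalences.
Each `α_X` is then an `L₂`-equivalence into a local object, hence an isomorphism exactly when its
source `F (L₁ X)` is local.
-/

namespace LocalizationData

variable {C : Type*} [Category C] (Λ : LocalizationData C)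

lemma isLocal_L_obj (X : C) : Λ.IsLocal (Λ.L.obj X) := by
  rw [IsLocal, ← Λ.coincide]
  exact Λ.isIso X

lemma isEquiv_l_app (X : C) : Λ.IsEquiv (Λ.l.app X) :=
  Λ.isIso X

lemma isEquiv_of_isIso {X Y : C} (f : X ⟶ Y) [IsIso f] : Λ.IsEquiv f :=
  inferInstanceAs (IsIso (Λ.L.map f))

lemma l_app_comp_L_map_comp_inv {X Z : C} (h : X ⟶ Z) [hZ : IsIso (Λ.l.app Z)] :
    Λ.l.app X ≫ Λ.L.map h ≫ inv (Λ.l.app Z) = h := by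
  rw [← Category.assoc, ← Λ.l.naturality h, Functor.id_map, Category.assoc, IsIso.hom_inv_id,
    Category.comp_id]

lemma hom_ext {A B Z : C} {g : A ⟶ B} (hg : Λ.IsEquiv g) (hZ : Λ.IsLocal Z)
    {h h' : B ⟶ Z} (w : g ≫ h = g ≫ h') : h = h' := by
  have : IsIso (Λ.L.map g) := hg
  have : IsIso (Λ.l.app Z) := hZ
  have hL : Λ.L.map h = Λ.L.map h' := by
    rw [← cancel_epi (Λ.L.map g), ← Functor.map_comp, ← Functor.map_comp, w]
  rw [← Λ.l_app_comp_L_map_comp_inv h, ← Λ.l_app_comp_L_map_comp_inv h', hL]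

lemma isIso_of_isEquiv_of_isLocal {A B : C} {g : A ⟶ B} (hg : Λ.IsEquiv g)
    (hA : Λ.IsLocal A) (hB : Λ.IsLocal B) : IsIso g := by
  have : IsIso (Λ.L.map g) := hg
  have : IsIso (Λ.l.app A) := hA
  have : IsIso (Λ.l.app B) := hB
  rw [← Λ.l_app_comp_L_map_comp_inv g]
  infer_instance

noncomputable def lift {A B Z : C} {g : A ⟶ B} (hg : Λ.IsEquiv g) (hZ : Λ.IsLocal Z)
    (h : A ⟶ Z) : B ⟶ Z :=
  have : IsIso (Λ.L.map g) := hg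
  have : IsIso (Λ.l.app Z) := hZ
  Λ.l.app B ≫ inv (Λ.L.map g) ≫ Λ.L.map h ≫ inv (Λ.l.app Z)

lemma comp_lift {A B Z : C} {g : A ⟶ B} (hg : Λ.IsEquiv g) (hZ : Λ.IsLocal Z) (h : A ⟶ Z) :
    g ≫ Λ.lift hg hZ h = h := by
  have := Λ.l.naturality g
  dsimp only [Functor.id_obj, Functor.id_map] at this
  -- the instances inside `lift` are `hg` and `hZ` themselves, not found by instance search
  rw [lift, reassoc_of% this, IsIso.hom_inv_id_assoc (I := hg),
    Λ.l_app_comp_L_map_comp_inv (hZ := hZ)]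

variable {Λ} {X Y Z : C} {f : X ⟶ Y} {g : Y ⟶ Z}

lemma IsEquiv.comp (hf : Λ.IsEquiv f) (hg : Λ.IsEquiv g) : Λ.IsEquiv (f ≫ g) := by
  have : IsIso (Λ.L.map f) := hf
  have : IsIso (Λ.L.map g) := hg
  rw [IsEquiv, Functor.map_comp]
  infer_instance

lemma IsEquiv.of_comp_left (hfg : Λ.IsEquiv (f ≫ g)) (hf : Λ.IsEquiv f) : Λ.IsEquiv g := by
  have : IsIso (Λ.L.map f) := hf
  have : IsIso (Λ.L.map f ≫ Λ.L.map g) := by rw [← Functor.map_comp]; exact hfg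
  exact IsIso.of_isIso_comp_left (Λ.L.map f) (Λ.L.map g)

lemma IsEquiv.of_comp_right (hfg : Λ.IsEquiv (f ≫ g)) (hg : Λ.IsEquiv g) : Λ.IsEquiv f := by
  have : IsIso (Λ.L.map g) := hg
  have : IsIso (Λ.L.map f ≫ Λ.L.map g) := by rw [← Functor.map_comp]; exact hfg
  exact IsIso.of_isIso_comp_right (Λ.L.map f) (Λ.L.map g)

end LocalizationData

section Comparison

open LocalizationData

variable {C₁ C₂ : Type*} [Category C₁] [Category C₂] (F : C₁ ⥤ C₂)
  (Λ₁ : LocalizationData C₁) (Λ₂ : LocalizationData C₂)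

def PreservesEquivs : Prop :=
  ∀ ⦃X Y : C₁⦄ (f : X ⟶ Y), Λ₁.IsEquiv f → Λ₂.IsEquiv (F.map f)

def PreservesLocals : Prop :=
  ∀ X : C₁, Λ₁.IsLocal X → Λ₂.IsLocal (F.obj X)

def IsComparison (α : Λ₁.L ⋙ F ⟶ F ⋙ Λ₂.L) : Prop :=
  (∀ X : C₁, F.map (Λ₁.l.app X) ≫ α.app X = Λ₂.l.app (F.obj X)) ∧
    ∀ X : C₁, Λ₂.IsEquiv (α.app X)

variable {F Λ₁ Λ₂}

lemma preservesEquivs_of_isEquiv_map_l_app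
    (h : ∀ X : C₁, Λ₂.IsEquiv (F.map (Λ₁.l.app X))) : PreservesEquivs F Λ₁ Λ₂ := by
  intro X Y f hf
  have : IsIso (Λ₁.L.map f) := hf
  have square : F.map f ≫ F.map (Λ₁.l.app Y) = F.map (Λ₁.l.app X) ≫ F.map (Λ₁.L.map f) := by
    rw [← F.map_comp, ← F.map_comp]
    exact congrArg F.map (Λ₁.l.naturality f)
  refine IsEquiv.of_comp_right ?_ (h Y)
  rw [square]
  exact (h X).comp (Λ₂.isEquiv_of_isIso _)

lemma IsComparison.isEquiv_map_l_app {α : Λ₁.L ⋙ F ⟶ F ⋙ Λ₂.L} (hα : IsComparison F Λ₁ Λ₂ α)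
    (X : C₁) : Λ₂.IsEquiv (F.map (Λ₁.l.app X)) :=
  IsEquiv.of_comp_right (by rw [hα.1 X]; exact Λ₂.isEquiv_l_app _) (hα.2 X)

lemma IsComparison.preservesEquivs {α : Λ₁.L ⋙ F ⟶ F ⋙ Λ₂.L} (hα : IsComparison F Λ₁ Λ₂ α) :
    PreservesEquivs F Λ₁ Λ₂ :=
  preservesEquivs_of_isEquiv_map_l_app hα.isEquiv_map_l_app

lemma IsComparison.ext {α α' : Λ₁.L ⋙ F ⟶ F ⋙ Λ₂.L} (hα : IsComparison F Λ₁ Λ₂ α)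
    (hα' : IsComparison F Λ₁ Λ₂ α') : α = α' := by
  ext X
  exact Λ₂.hom_ext (hα.isEquiv_map_l_app X) (Λ₂.isLocal_L_obj _) (by rw [hα.1 X, hα'.1 X])

lemma IsComparison.isIso_iff {α : Λ₁.L ⋙ F ⟶ F ⋙ Λ₂.L} (hα : IsComparison F Λ₁ Λ₂ α) :
    IsIso α ↔ PreservesLocals F Λ₁ Λ₂ := by
  constructor
  · intro _ X hX
    have : IsIso (Λ₁.l.app X) := hX
    rw [IsLocal, ← hα.1 X]
    infer_instance
  · intro hF
    have (X : C₁) : IsIso (α.app X) :=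
      Λ₂.isIso_of_isEquiv_of_isLocal (hα.2 X) (hF _ (Λ₁.isLocal_L_obj X)) (Λ₂.isLocal_L_obj _)
    exact NatIso.isIso_of_isIso_app α

noncomputable def comparison (hF : PreservesEquivs F Λ₁ Λ₂) : Λ₁.L ⋙ F ⟶ F ⋙ Λ₂.L where
  app X := Λ₂.lift (hF _ (Λ₁.isEquiv_l_app X)) (Λ₂.isLocal_L_obj _) (Λ₂.l.app (F.obj X))
  naturality X Y f := by
    refine Λ₂.hom_ext (hF _ (Λ₁.isEquiv_l_app X)) (Λ₂.isLocal_L_obj _) ?_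
    have h₁ := Λ₁.l.naturality f
    have h₂ := Λ₂.l.naturality (F.map f)
    dsimp only [Functor.id_obj, Functor.id_map, Functor.comp_obj, Functor.comp_map] at h₁ h₂ ⊢
    rw [← F.map_comp_assoc, ← h₁, F.map_comp_assoc, comp_lift, ← Category.assoc, comp_lift, h₂]

lemma isComparison_comparison (hF : PreservesEquivs F Λ₁ Λ₂) :
    IsComparison F Λ₁ Λ₂ (comparison hF) :=
  have triangle (X : C₁) : F.map (Λ₁.l.app X) ≫ (comparison hF).app X = Λ₂.l.app (F.obj X) :=
    Λ₂.comp_lift _ _ _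
  ⟨triangle, fun X => IsEquiv.of_comp_left (by rw [triangle]; exact Λ₂.isEquiv_l_app _)
    (hF _ (Λ₁.isEquiv_l_app X))⟩

end Comparison

/-- `F` preserves equivalences iff there is a natural transformation
`α : F ∘ L₁ ⟶ L₂ ∘ F` with `α_X ∘ F((l₁)_X) = (l₂)_{F X}` whose components are
`L₂`-equivalences; such `α` is unique, and it is an isomorphism iff `F` preserves
local objects. -/
theorem preserves_equiv_iff_exists_comparison_alpha
    {C₁ C₂ : Type*} [Category C₁] [Category C₂] (F : C₁ ⥤ C₂)
    (Λ₁ : LocalizationData C₁) (Λ₂ : LocalizationData C₂) :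
    ((∀ ⦃X Y : C₁⦄ (f : X ⟶ Y), Λ₁.IsEquiv f → Λ₂.IsEquiv (F.map f)) ↔
      ∃ α : Λ₁.L ⋙ F ⟶ F ⋙ Λ₂.L,
        (∀ X : C₁, F.map (Λ₁.l.app X) ≫ α.app X = Λ₂.l.app (F.obj X)) ∧
        ∀ X : C₁, Λ₂.IsEquiv (α.app X)) ∧
    (∀ α α' : Λ₁.L ⋙ F ⟶ F ⋙ Λ₂.L,
      ((∀ X : C₁, F.map (Λ₁.l.app X) ≫ α.app X = Λ₂.l.app (F.obj X)) ∧
        ∀ X : C₁, Λ₂.IsEquiv (α.app X)) →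
      ((∀ X : C₁, F.map (Λ₁.l.app X) ≫ α'.app X = Λ₂.l.app (F.obj X)) ∧
        ∀ X : C₁, Λ₂.IsEquiv (α'.app X)) → α = α') ∧
    (∀ α : Λ₁.L ⋙ F ⟶ F ⋙ Λ₂.L,
      ((∀ X : C₁, F.map (Λ₁.l.app X) ≫ α.app X = Λ₂.l.app (F.obj X)) ∧
        ∀ X : C₁, Λ₂.IsEquiv (α.app X)) →
      (IsIso α ↔ ∀ X : C₁, Λ₁.IsLocal X → Λ₂.IsLocal (F.obj X))) :=
  ⟨⟨fun hF => ⟨comparison hF, isComparison_comparison hF⟩,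
      fun ⟨_, hα⟩ => IsComparison.preservesEquivs hα⟩,
    fun _ _ hα hα' => IsComparison.ext hα hα',
    fun _ hα => IsComparison.isIso_iff hα⟩
end

section
/- Let F : C₁ → C₂ be a functor, let (L₁, l₁) be a localization on C₁ and (L₂, l₂) a localization on C₂. Then F preserves local objects if and only if there is a natural transformation β : L₂ ∘ F → F ∘ L₁ such that β_X ∘ (l₂)_{FX} = F((l₁)_X) for every object X. When this holds, such β is unique, and β is a natural isomorphism if and only if F preserves equivalences. -/
open CategoryTheory

/-!
Maps out of `L Y` into a local object are determined by their restriction along `l Y`. If `F`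
preserves local objects, `l₂` is invertible at `F (L₁ X)`, and
`β X := L₂ (F (l₁ X)) ≫ (l₂ (F (L₁ X)))⁻¹` is the comparison map, unique by that rigidity.
Conversely, for local `X` a comparison map yields the retraction `β X ≫ (F (l₁ X))⁻¹` of
`l₂ (F X)`, and an object whose unit has a retraction is local. Since `β X` goes between
`L₂`-local objects, it is invertible iff it is an `L₂`-equivalence, i.e., by its defining
equation, iff `F (l₁ X)` is one; and if `β` is invertible, `L₂ (F f)` is conjugate to `F (L₁ f)`.
-/

namespace LocalizationData

variable {C : Type*} [Category C] (Λ : LocalizationData C)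

lemma hom_ext_s2 {Y Z : C} (hZ : Λ.IsLocal Z) {h h' : Λ.L.obj Y ⟶ Z}
    (H : Λ.l.app Y ≫ h = Λ.l.app Y ≫ h') : h = h' := by
  have := Λ.isIso Y
  have : IsIso (Λ.l.app Z) := hZ
  have hL : Λ.L.map h = Λ.L.map h' := by
    rw [← cancel_epi (Λ.L.map (Λ.l.app Y)), ← Functor.map_comp, ← Functor.map_comp, H]
  rw [← cancel_mono (Λ.l.app Z)]
  calc h ≫ Λ.l.app Z = Λ.l.app (Λ.L.obj Y) ≫ Λ.L.map h := Λ.l.naturality h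
    _ = h' ≫ Λ.l.app Z := by rw [hL]; exact (Λ.l.naturality h').symm

lemma isLocal_of_retraction {Y : C} (r : Λ.L.obj Y ⟶ Y) (hr : Λ.l.app Y ≫ r = 𝟙 Y) :
    Λ.IsLocal Y := by
  refine ⟨r, hr, Λ.hom_ext_s2 (Λ.isLocal_L_obj Y) ?_⟩
  rw [reassoc_of% hr, Category.comp_id]

lemma isIso_of_isEquiv {A B : C} {h : A ⟶ B} (hA : Λ.IsLocal A) (hB : Λ.IsLocal B)
    (he : Λ.IsEquiv h) : IsIso h := by
  have : IsIso (Λ.l.app A) := hA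
  have : IsIso (Λ.l.app B) := hB
  have : IsIso (Λ.L.map h) := he
  exact IsIso.of_isIso_fac_right (Λ.l.naturality h)

variable {C₁ C₂ : Type*} [Category C₁] [Category C₂] (F : C₁ ⥤ C₂)
  (Λ₁ : LocalizationData C₁) (Λ₂ : LocalizationData C₂)

def PreservesLocal : Prop :=
  ∀ X : C₁, Λ₁.IsLocal X → Λ₂.IsLocal (F.obj X)

def PreservesEquiv : Prop :=
  ∀ ⦃X Y : C₁⦄ (f : X ⟶ Y), Λ₁.IsEquiv f → Λ₂.IsEquiv (F.map f)

def IsComparison (β : F ⋙ Λ₂.L ⟶ Λ₁.L ⋙ F) : Prop :=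
  ∀ X : C₁, Λ₂.l.app (F.obj X) ≫ β.app X = F.map (Λ₁.l.app X)

variable {F Λ₁ Λ₂}

lemma exists_isComparison (hF : PreservesLocal F Λ₁ Λ₂) :
    ∃ β : F ⋙ Λ₂.L ⟶ Λ₁.L ⋙ F, IsComparison F Λ₁ Λ₂ β := by
  have (X : C₁) : IsIso (Λ₂.l.app (F.obj (Λ₁.L.obj X))) := hF _ (Λ₁.isLocal_L_obj X)
  refine ⟨{ app X := Λ₂.L.map (F.map (Λ₁.l.app X)) ≫ inv (Λ₂.l.app (F.obj (Λ₁.L.obj X)))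
            naturality X Y f := ?_ }, fun X => ?_⟩
  · have hinv : inv (Λ₂.l.app (F.obj (Λ₁.L.obj X))) ≫ F.map (Λ₁.L.map f) =
        Λ₂.L.map (F.map (Λ₁.L.map f)) ≫ inv (Λ₂.l.app (F.obj (Λ₁.L.obj Y))) := by
      rw [IsIso.inv_comp_eq, ← Category.assoc, IsIso.eq_comp_inv]
      exact Λ₂.l.naturality _
    simp only [Functor.comp_obj, Functor.comp_map, Category.assoc, hinv, ← Functor.map_comp_assoc]
    rw [← F.map_comp, ← F.map_comp, ← Λ₁.l.naturality f]
    rfl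
  · simp [← reassoc_of% (Λ₂.l.naturality (F.map (Λ₁.l.app X)))]

lemma preservesEquiv_of_iso (e : F ⋙ Λ₂.L ≅ Λ₁.L ⋙ F) : PreservesEquiv F Λ₁ Λ₂ := by
  intro X Y f (hf : IsIso (Λ₁.L.map f))
  exact (NatIso.isIso_map_iff e f).mpr (inferInstanceAs (IsIso (F.map (Λ₁.L.map f))))

namespace IsComparison

variable {β : F ⋙ Λ₂.L ⟶ Λ₁.L ⋙ F}

lemma preservesLocal (hβ : IsComparison F Λ₁ Λ₂ β) : PreservesLocal F Λ₁ Λ₂ := by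
  intro X hX
  have : IsIso (Λ₁.l.app X) := hX
  exact Λ₂.isLocal_of_retraction (β.app X ≫ inv (F.map (Λ₁.l.app X)))
    (by rw [reassoc_of% (hβ X), IsIso.hom_inv_id])

lemma isLocal_app (hβ : IsComparison F Λ₁ Λ₂ β) (X : C₁) : Λ₂.IsLocal ((Λ₁.L ⋙ F).obj X) :=
  hβ.preservesLocal _ (Λ₁.isLocal_L_obj X)

lemma ext (hβ : IsComparison F Λ₁ Λ₂ β) {β' : F ⋙ Λ₂.L ⟶ Λ₁.L ⋙ F}
    (hβ' : IsComparison F Λ₁ Λ₂ β') : β = β' := by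
  ext X
  exact Λ₂.hom_ext_s2 (hβ.isLocal_app X) (by rw [hβ X, hβ' X])

lemma isEquiv_app_iff (hβ : IsComparison F Λ₁ Λ₂ β) (X : C₁) :
    Λ₂.IsEquiv (β.app X) ↔ Λ₂.IsEquiv (F.map (Λ₁.l.app X)) := by
  have := Λ₂.isIso (F.obj X)
  unfold IsEquiv
  rw [← hβ X, Functor.map_comp, isIso_comp_left_iff]

lemma isIso_of_preservesEquiv (hβ : IsComparison F Λ₁ Λ₂ β) (hF : PreservesEquiv F Λ₁ Λ₂) :
    IsIso β := by
  have (X : C₁) : IsIso (β.app X) :=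
    Λ₂.isIso_of_isEquiv (Λ₂.isLocal_L_obj (F.obj X)) (hβ.isLocal_app X)
      ((hβ.isEquiv_app_iff X).mpr (hF _ (Λ₁.isEquiv_l_app X)))
  exact NatIso.isIso_of_isIso_app β

lemma isIso_iff (hβ : IsComparison F Λ₁ Λ₂ β) : IsIso β ↔ PreservesEquiv F Λ₁ Λ₂ :=
  ⟨fun _ => preservesEquiv_of_iso (asIso β), hβ.isIso_of_preservesEquiv⟩

end IsComparison

end LocalizationData

/-- `F` preserves local objects iff there is a natural transformation
`β : L₂ ∘ F ⟶ F ∘ L₁` with `β_X ∘ (l₂)_{F X} = F((l₁)_X)`; such `β` is unique, and it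
is an isomorphism iff `F` preserves equivalences. -/
theorem preserves_local_iff_exists_comparison_beta
    {C₁ C₂ : Type*} [Category C₁] [Category C₂] (F : C₁ ⥤ C₂)
    (Λ₁ : LocalizationData C₁) (Λ₂ : LocalizationData C₂) :
    ((∀ X : C₁, Λ₁.IsLocal X → Λ₂.IsLocal (F.obj X)) ↔
      ∃ β : F ⋙ Λ₂.L ⟶ Λ₁.L ⋙ F,
        ∀ X : C₁, Λ₂.l.app (F.obj X) ≫ β.app X = F.map (Λ₁.l.app X)) ∧
    (∀ β β' : F ⋙ Λ₂.L ⟶ Λ₁.L ⋙ F,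
      (∀ X : C₁, Λ₂.l.app (F.obj X) ≫ β.app X = F.map (Λ₁.l.app X)) →
      (∀ X : C₁, Λ₂.l.app (F.obj X) ≫ β'.app X = F.map (Λ₁.l.app X)) → β = β') ∧
    (∀ β : F ⋙ Λ₂.L ⟶ Λ₁.L ⋙ F,
      (∀ X : C₁, Λ₂.l.app (F.obj X) ≫ β.app X = F.map (Λ₁.l.app X)) →
      (IsIso β ↔ ∀ ⦃X Y : C₁⦄ (f : X ⟶ Y), Λ₁.IsEquiv f → Λ₂.IsEquiv (F.map f))) :=
  ⟨⟨LocalizationData.exists_isComparison,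
      fun ⟨_, hβ⟩ => LocalizationData.IsComparison.preservesLocal hβ⟩,
    fun _ _ hβ hβ' => LocalizationData.IsComparison.ext hβ hβ',
    fun _ hβ => LocalizationData.IsComparison.isIso_iff hβ⟩
end

section
/- Let F : C₁ ⇄ C₂ : G be an adjunction, let f : A → B be a morphism in C₁, and suppose that an f-localization functor (L_f, l) on C₁ and an Ff-localization functor (L_{Ff}, l') on C₂ exist. Then: (1) there is a unique natural transformation α : F ∘ L_f → L_{Ff} ∘ F with α_X ∘ F(l_X) = l'_{FX} for all X, and each α_X is an Ff-equivalence; (2) there is a unique natural transformation β : L_f ∘ G → G ∘ L_{Ff} with β_Y ∘ l_{GY} = G(l'_Y) for all Y; (3) α is a natural isomorphism if and only if F sends f-local objects to Ff-local objects; and (4) β is a natural isomorphism if and only if G sends Ff-equivalences to f-equivalences. -/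
open CategoryTheory

/-- An object `X` is `f`-local if precomposition with `f` gives a bijection
`C(B, X) → C(A, X)`. -/
def IsLocalWrt {C : Type*} [Category C] {A B : C} (f : A ⟶ B) (X : C) : Prop :=
  Function.Bijective (fun g : B ⟶ X => f ≫ g)

/-- A morphism `g` is an `f`-equivalence if every `f`-local object is orthogonal to `g`. -/
def IsEquivWrt {C : Type*} [Category C] {A B : C} (f : A ⟶ B) {U V : C} (g : U ⟶ V) : Prop :=
  ∀ X : C, IsLocalWrt f X → Function.Bijective (fun h : V ⟶ X => g ≫ h)

/-- An `f`-localization functor: a localization whose local objects (those `X` with `l_X` an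
isomorphism) are exactly the `f`-local objects, and whose unit components are
`f`-equivalences. -/
structure FLocalization {C : Type*} [Category C] {A B : C} (f : A ⟶ B)
    extends LocalizationData C where
  local_iff : ∀ X : C, IsIso (l.app X) ↔ IsLocalWrt f X
  unit_isEquiv : ∀ X : C, IsEquivWrt f (l.app X)

/-!
An `f`-equivalence `g : U ⟶ V` lets every map from `U` to an `f`-local object extend uniquely
along `g`. Both comparison maps arise this way, componentwise and then naturally: `α` extends
`l'_{F X}` along `F l_X` (a left adjoint preserves equivalences, since `G` preserves local
objects) and `β` extends `G l'_Y` along `l_{G Y}`. Equivalences satisfy two-out-of-three, and an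
equivalence between local objects is an isomorphism; this gives both isomorphism criteria.
-/

namespace IsEquivWrt

variable {C : Type*} [Category C] {A B : C} {f : A ⟶ B} {U V W X : C}

lemma precomp_comp (g : U ⟶ V) (h : V ⟶ W) :
    (fun k : W ⟶ X => (g ≫ h) ≫ k) =
      (fun k : V ⟶ X => g ≫ k) ∘ (fun k : W ⟶ X => h ≫ k) := by
  funext k
  simp

lemma of_isIso (f : A ⟶ B) (g : U ⟶ V) [IsIso g] : IsEquivWrt f g := fun X _ =>
  ⟨fun a b h => by simpa using congrArg (inv g ≫ ·) h, fun k => ⟨inv g ≫ k, by simp⟩⟩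

lemma comp_iff_of_left {g : U ⟶ V} (h : V ⟶ W) (hg : IsEquivWrt f g) :
    IsEquivWrt f (g ≫ h) ↔ IsEquivWrt f h :=
  forall₂_congr fun X hX => by rw [precomp_comp]; exact (hg X hX).of_comp_iff' _

lemma comp_iff_of_right (g : U ⟶ V) {h : V ⟶ W} (hh : IsEquivWrt f h) :
    IsEquivWrt f (g ≫ h) ↔ IsEquivWrt f g :=
  forall₂_congr fun X hX => by
    rw [precomp_comp]
    exact Function.Bijective.of_comp_iff _ (hh X hX)

lemma comp {g : U ⟶ V} {h : V ⟶ W} (hg : IsEquivWrt f g) (hh : IsEquivWrt f h) :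
    IsEquivWrt f (g ≫ h) :=
  (comp_iff_of_left h hg).2 hh

lemma hom_ext {g : U ⟶ V} (hg : IsEquivWrt f g) (hX : IsLocalWrt f X) {a b : V ⟶ X}
    (h : g ≫ a = g ≫ b) : a = b :=
  (hg X hX).1 h

noncomputable def desc {g : U ⟶ V} (hg : IsEquivWrt f g) (hX : IsLocalWrt f X) (k : U ⟶ X) :
    V ⟶ X :=
  (Equiv.ofBijective _ (hg X hX)).symm k

lemma fac {g : U ⟶ V} (hg : IsEquivWrt f g) (hX : IsLocalWrt f X) (k : U ⟶ X) :
    g ≫ hg.desc hX k = k :=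
  (Equiv.ofBijective _ (hg X hX)).apply_symm_apply k

lemma isIso {g : U ⟶ V} (hg : IsEquivWrt f g) (hU : IsLocalWrt f U) (hV : IsLocalWrt f V) :
    IsIso g := by
  have hgr : g ≫ hg.desc hU (𝟙 U) = 𝟙 U := hg.fac hU (𝟙 U)
  refine ⟨hg.desc hU (𝟙 U), hgr, hg.hom_ext hV ?_⟩
  rw [reassoc_of% hgr, Category.comp_id]

end IsEquivWrt

namespace FLocalization

variable {C : Type*} [Category C] {A B : C} {f : A ⟶ B} (Lf : FLocalization f)

lemma isLocalWrt_obj (X : C) : IsLocalWrt f (Lf.L.obj X) := by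
  rw [← Lf.local_iff, ← Lf.coincide]
  exact Lf.isIso X

lemma isIso_map {U V : C} {g : U ⟶ V} (hg : IsEquivWrt f g) : IsIso (Lf.L.map g) := by
  have hcomp : IsEquivWrt f (Lf.l.app U ≫ Lf.L.map g) := by
    rw [← Lf.l.naturality g]
    exact hg.comp (Lf.unit_isEquiv V)
  exact ((IsEquivWrt.comp_iff_of_left _ (Lf.unit_isEquiv U)).1 hcomp).isIso
    (Lf.isLocalWrt_obj U) (Lf.isLocalWrt_obj V)

end FLocalization

namespace CategoryTheory.Adjunction

variable {C₁ C₂ : Type*} [Category C₁] [Category C₂] {F : C₁ ⥤ C₂} {G : C₂ ⥤ C₁}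
  {A B : C₁} {f : A ⟶ B}

lemma isLocalWrt_obj_right (adj : F ⊣ G) {Y : C₂} (hY : IsLocalWrt (F.map f) Y) :
    IsLocalWrt f (G.obj Y) := by
  have key : (fun g : B ⟶ G.obj Y => f ≫ g)
      = adj.homEquiv A Y ∘ (fun g : F.obj B ⟶ Y => F.map f ≫ g) ∘
          (adj.homEquiv B Y).symm := by
    funext g
    simp [homEquiv_naturality_left]
  rw [IsLocalWrt, key]
  exact ((adj.homEquiv A Y).bijective.comp hY).comp (adj.homEquiv B Y).symm.bijective

lemma isEquivWrt_map_left (adj : F ⊣ G) {U V : C₁} {g : U ⟶ V} (hg : IsEquivWrt f g) :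
    IsEquivWrt (F.map f) (F.map g) := by
  intro Y hY
  have key : (fun k : F.obj V ⟶ Y => F.map g ≫ k)
      = (adj.homEquiv U Y).symm ∘ (fun k : V ⟶ G.obj Y => g ≫ k) ∘ adj.homEquiv V Y := by
    funext k
    simp [homEquiv_naturality_left_symm]
  rw [key]
  exact ((adj.homEquiv U Y).symm.bijective.comp (hg _ (adj.isLocalWrt_obj_right hY))).comp
    (adj.homEquiv V Y).bijective

end CategoryTheory.Adjunction

namespace CategoryTheory.NatTrans

variable {D C : Type*} [Category D] [Category C] {A B : C} {f : A ⟶ B} {P Q R : D ⥤ C}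
  {u : P ⟶ Q} (hu : ∀ d, IsEquivWrt f (u.app d))
  (v : P ⟶ R) (hR : ∀ d, IsLocalWrt f (R.obj d))

noncomputable def descOfIsEquivWrt : Q ⟶ R where
  app d := (hu d).desc (hR d) (v.app d)
  naturality d d' h := (hu d).hom_ext (hR d') <| by
    rw [← u.naturality_assoc, (hu d').fac, v.naturality, reassoc_of% (hu d).fac]

lemma descOfIsEquivWrt_fac (d : D) : u.app d ≫ (descOfIsEquivWrt hu v hR).app d = v.app d :=
  (hu d).fac (hR d) (v.app d)

lemma eq_descOfIsEquivWrt {w : Q ⟶ R} (hw : ∀ d, u.app d ≫ w.app d = v.app d) :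
    w = descOfIsEquivWrt hu v hR := by
  ext d
  exact (hu d).hom_ext (hR d) ((hw d).trans (descOfIsEquivWrt_fac hu v hR d).symm)

end CategoryTheory.NatTrans

section Comparison

variable {C₁ C₂ : Type*} [Category C₁] [Category C₂] {F : C₁ ⥤ C₂} {G : C₂ ⥤ C₁}
  (adj : F ⊣ G) {A B : C₁} {f : A ⟶ B} (Lf : FLocalization f) (LFf : FLocalization (F.map f))

noncomputable def leftAdjointComparison : Lf.L ⋙ F ⟶ F ⋙ LFf.L :=
  NatTrans.descOfIsEquivWrt (u := (Functor.whiskerRight Lf.l F : F ⟶ Lf.L ⋙ F))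
    (fun X => adj.isEquivWrt_map_left (Lf.unit_isEquiv X))
    (Functor.whiskerLeft F LFf.l : F ⟶ F ⋙ LFf.L) (fun X => LFf.isLocalWrt_obj (F.obj X))

lemma leftAdjointComparison_fac (X : C₁) :
    F.map (Lf.l.app X) ≫ (leftAdjointComparison adj Lf LFf).app X = LFf.l.app (F.obj X) :=
  (adj.isEquivWrt_map_left (Lf.unit_isEquiv X)).fac (LFf.isLocalWrt_obj (F.obj X)) _

lemma eq_leftAdjointComparison {α : Lf.L ⋙ F ⟶ F ⋙ LFf.L}
    (hα : ∀ X, F.map (Lf.l.app X) ≫ α.app X = LFf.l.app (F.obj X)) :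
    α = leftAdjointComparison adj Lf LFf :=
  NatTrans.eq_descOfIsEquivWrt _ _ _ hα

lemma isEquivWrt_leftAdjointComparison_app (X : C₁) :
    IsEquivWrt (F.map f) ((leftAdjointComparison adj Lf LFf).app X) := by
  rw [← IsEquivWrt.comp_iff_of_left _ (adj.isEquivWrt_map_left (Lf.unit_isEquiv X)),
    leftAdjointComparison_fac]
  exact LFf.unit_isEquiv (F.obj X)

lemma isIso_leftAdjointComparison_iff :
    IsIso (leftAdjointComparison adj Lf LFf) ↔
      ∀ X : C₁, IsLocalWrt f X → IsLocalWrt (F.map f) (F.obj X) := by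
  rw [NatTrans.isIso_iff_isIso_app]
  constructor
  · intro hiso X hX
    have : IsIso (Lf.l.app X) := (Lf.local_iff X).2 hX
    rw [← LFf.local_iff, ← leftAdjointComparison_fac adj Lf LFf X]
    infer_instance
  · intro hF X
    exact (isEquivWrt_leftAdjointComparison_app adj Lf LFf X).isIso
      (hF _ (Lf.isLocalWrt_obj X)) (LFf.isLocalWrt_obj (F.obj X))

noncomputable def rightAdjointComparison : G ⋙ Lf.L ⟶ LFf.L ⋙ G :=
  NatTrans.descOfIsEquivWrt (u := (Functor.whiskerLeft G Lf.l : G ⟶ G ⋙ Lf.L))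
    (fun Y => Lf.unit_isEquiv (G.obj Y))
    (Functor.whiskerRight LFf.l G : G ⟶ LFf.L ⋙ G)
    (fun Y => adj.isLocalWrt_obj_right (LFf.isLocalWrt_obj Y))

lemma rightAdjointComparison_fac (Y : C₂) :
    Lf.l.app (G.obj Y) ≫ (rightAdjointComparison adj Lf LFf).app Y = G.map (LFf.l.app Y) :=
  (Lf.unit_isEquiv (G.obj Y)).fac (adj.isLocalWrt_obj_right (LFf.isLocalWrt_obj Y)) _

lemma eq_rightAdjointComparison {β : G ⋙ Lf.L ⟶ LFf.L ⋙ G}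
    (hβ : ∀ Y, Lf.l.app (G.obj Y) ≫ β.app Y = G.map (LFf.l.app Y)) :
    β = rightAdjointComparison adj Lf LFf :=
  NatTrans.eq_descOfIsEquivWrt _ _ _ hβ

lemma isEquivWrt_map_unit_iff_isIso_rightAdjointComparison_app (Y : C₂) :
    IsEquivWrt f (G.map (LFf.l.app Y)) ↔ IsIso ((rightAdjointComparison adj Lf LFf).app Y) := by
  rw [← rightAdjointComparison_fac adj, IsEquivWrt.comp_iff_of_left _ (Lf.unit_isEquiv _)]
  refine ⟨fun h => h.isIso (Lf.isLocalWrt_obj _)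
    (adj.isLocalWrt_obj_right (LFf.isLocalWrt_obj Y)), fun h => IsEquivWrt.of_isIso f _⟩

lemma isIso_rightAdjointComparison_iff :
    IsIso (rightAdjointComparison adj Lf LFf) ↔ ∀ ⦃U V : C₂⦄ (g : U ⟶ V),
      IsEquivWrt (F.map f) g → IsEquivWrt f (G.map g) := by
  simp only [NatTrans.isIso_iff_isIso_app,
    ← isEquivWrt_map_unit_iff_isIso_rightAdjointComparison_app adj]
  refine ⟨fun hG U V g hg => ?_, fun hG Y => hG _ (LFf.unit_isEquiv Y)⟩
  -- naturality of `l'` turns `G g ≫ G l'_V` into `G l'_U ≫ G (L_{F f} g)`, with `L_{F f} g` iso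
  have : IsIso (LFf.L.map g) := LFf.isIso_map hg
  rw [← IsEquivWrt.comp_iff_of_right _ (hG V), ← G.map_comp,
    show g ≫ LFf.l.app V = LFf.l.app U ≫ LFf.L.map g from LFf.l.naturality g, G.map_comp]
  exact (hG U).comp (IsEquivWrt.of_isIso f _)

end Comparison

/-- For an adjunction `F ⊣ G`, a morphism `f` in `C₁`, an `f`-localization
`L_f` on `C₁` and an `F f`-localization `L_{F f}` on `C₂`: (1) there is a unique natural
transformation `α : F ∘ L_f ⟶ L_{F f} ∘ F` with `α_X ∘ F(l_X) = l'_{F X}`, whose components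
are `F f`-equivalences; (2) there is a unique natural transformation
`β : L_f ∘ G ⟶ G ∘ L_{F f}` with `β_Y ∘ l_{G Y} = G(l'_Y)`; (3) `α` is an isomorphism iff `F`
sends `f`-local objects to `F f`-local objects; (4) `β` is an isomorphism iff `G` sends
`F f`-equivalences to `f`-equivalences. -/
theorem comparison_transformations_for_f_localizations
    {C₁ C₂ : Type*} [Category C₁] [Category C₂]
    (F : C₁ ⥤ C₂) (G : C₂ ⥤ C₁) (adj : F ⊣ G)
    {A B : C₁} (f : A ⟶ B)
    (Lf : FLocalization f) (LFf : FLocalization (F.map f)) :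
    (∃ α : Lf.L ⋙ F ⟶ F ⋙ LFf.L,
      (∀ X : C₁, F.map (Lf.l.app X) ≫ α.app X = LFf.l.app (F.obj X)) ∧
      (∀ X : C₁, IsEquivWrt (F.map f) (α.app X)) ∧
      (∀ α' : Lf.L ⋙ F ⟶ F ⋙ LFf.L,
        (∀ X : C₁, F.map (Lf.l.app X) ≫ α'.app X = LFf.l.app (F.obj X)) → α' = α) ∧
      (IsIso α ↔ ∀ X : C₁, IsLocalWrt f X → IsLocalWrt (F.map f) (F.obj X))) ∧
    (∃ β : G ⋙ Lf.L ⟶ LFf.L ⋙ G,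
      (∀ Y : C₂, Lf.l.app (G.obj Y) ≫ β.app Y = G.map (LFf.l.app Y)) ∧
      (∀ β' : G ⋙ Lf.L ⟶ LFf.L ⋙ G,
        (∀ Y : C₂, Lf.l.app (G.obj Y) ≫ β'.app Y = G.map (LFf.l.app Y)) → β' = β) ∧
      (IsIso β ↔ ∀ ⦃U V : C₂⦄ (g : U ⟶ V),
        IsEquivWrt (F.map f) g → IsEquivWrt f (G.map g))) := by
  exact ⟨⟨leftAdjointComparison adj Lf LFf, leftAdjointComparison_fac adj Lf LFf,
      isEquivWrt_leftAdjointComparison_app adj Lf LFf,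
      fun _ => eq_leftAdjointComparison adj Lf LFf, isIso_leftAdjointComparison_iff adj Lf LFf⟩,
    ⟨rightAdjointComparison adj Lf LFf, rightAdjointComparison_fac adj Lf LFf,
      fun _ => eq_rightAdjointComparison adj Lf LFf,
      isIso_rightAdjointComparison_iff adj Lf LFf⟩⟩
end

section
/- Let F : C₁ → C₂ be a functor, let (C₁', c₁) be a colocalization on C₁ and (C₂', c₂) a colocalization on C₂. Then: (i) F preserves colocal objects if and only if there is a natural transformation α : F ∘ C₁' → C₂' ∘ F such that (c₂)_{FX} ∘ α_X = F((c₁)_X) for every X; such α is unique, and α is a natural isomorphism if and only if F preserves equivalences. (ii) F preserves equivalences if and only if there is a natural transformation β : C₂' ∘ F → F ∘ C₁' such that F((c₁)_X) ∘ β_X = (c₂)_{FX} for every X and each β_X is a C₂'-equivalence; such β is unique, and β is a natural isomorphism if and only if F preserves colocal objects. -/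
/-!
Two facts about a colocalization carry the whole argument: maps out of a colocal object can be
cancelled on the right by any equivalence (apply `K`, cancel the isomorphism, and use that
`c` is an isomorphism at the source), and an equivalence between colocal objects is an
isomorphism. Then `α_X` is the lift of `F (c₁ X)` through `c₂` at the colocal object
`F (K₁ X)`, and `β_X = (K₂ F (c₁ X))⁻¹ ≫ c₂`; naturality and uniqueness follow by cancelling
`c₂` resp. the equivalence `F (c₁ X)`, and invertibility from the second fact, since the
components go between colocal objects.
-/

open CategoryTheory

/-- A colocalization (coreflection) on a category `C`: a functor `K : C ⥤ C` with a natural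
transformation `c : K ⟶ 𝟭 C` such that `K (c X) = c (K X)` and these morphisms are
isomorphisms. -/
structure ColocalizationData (C : Type*) [Category C] where
  /-- the colocalization functor -/
  K : C ⥤ C
  /-- the counit -/
  c : K ⟶ 𝟭 C
  coincide : ∀ X : C, K.map (c.app X) = c.app (K.obj X)
  isIso : ∀ X : C, IsIso (K.map (c.app X))

/-- An object `X` is colocal if `c X : K X ⟶ X` is an isomorphism. -/
def ColocalizationData.IsColocal {C : Type*} [Category C] (Γ : ColocalizationData C)
    (X : C) : Prop :=
  IsIso (Γ.c.app X)

/-- A morphism `g` is an equivalence if `K g` is an isomorphism. -/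
def ColocalizationData.IsEquiv {C : Type*} [Category C] (Γ : ColocalizationData C)
    {X Y : C} (g : X ⟶ Y) : Prop :=
  IsIso (Γ.K.map g)

namespace ColocalizationData

variable {C : Type*} [Category C] (Γ : ColocalizationData C)

lemma isColocal_K_obj (X : C) : Γ.IsColocal (Γ.K.obj X) := by
  rw [IsColocal, ← Γ.coincide X]
  exact Γ.isIso X

lemma isEquiv_c_app (X : C) : Γ.IsEquiv (Γ.c.app X) :=
  Γ.isIso X

lemma isEquiv_of_isIso {X Y : C} (f : X ⟶ Y) [IsIso f] : Γ.IsEquiv f :=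
  inferInstanceAs (IsIso (Γ.K.map f))

lemma isEquiv_of_fac {X Y Z : C} {f : X ⟶ Y} {g : Y ⟶ Z} {h : X ⟶ Z} (w : f ≫ g = h)
    (hg : Γ.IsEquiv g) (hh : Γ.IsEquiv h) : Γ.IsEquiv f := by
  have : IsIso (Γ.K.map g) := hg
  have : IsIso (Γ.K.map h) := hh
  have w' : Γ.K.map f ≫ Γ.K.map g = Γ.K.map h := by rw [← Functor.map_comp, w]
  exact IsIso.of_isIso_fac_right w'

lemma isEquiv_iff_of_comm_sq {X X' Y Y' : C} {u : X ⟶ X'} {v : Y ⟶ Y'} {g : X ⟶ Y}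
    {g' : X' ⟶ Y'} (hu : Γ.IsEquiv u) (hv : Γ.IsEquiv v) (w : u ≫ g' = g ≫ v) :
    Γ.IsEquiv g ↔ Γ.IsEquiv g' := by
  have : IsIso (Γ.K.map u) := hu
  have : IsIso (Γ.K.map v) := hv
  rw [IsEquiv, IsEquiv, ← isIso_comp_right_iff (Γ.K.map g) (Γ.K.map v), ← Functor.map_comp,
    ← w, Functor.map_comp, isIso_comp_left_iff]

lemma isEquiv_K_map_iff {X Y : C} (f : X ⟶ Y) : Γ.IsEquiv (Γ.K.map f) ↔ Γ.IsEquiv f :=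
  Γ.isEquiv_iff_of_comm_sq (Γ.isEquiv_c_app X) (Γ.isEquiv_c_app Y) (Γ.c.naturality f).symm

lemma eq_of_K_map_eq {A B : C} (hA : Γ.IsColocal A) {u v : A ⟶ B}
    (h : Γ.K.map u = Γ.K.map v) : u = v := by
  have : IsIso (Γ.c.app A) := hA
  rw [← cancel_epi (Γ.c.app A), ← Functor.id_map u, ← Functor.id_map v, ← Γ.c.naturality,
    ← Γ.c.naturality, h]

lemma eq_of_comp_eq_of_isEquiv {A Y Z : C} (hA : Γ.IsColocal A) {h : Y ⟶ Z}
    (hh : Γ.IsEquiv h) {u v : A ⟶ Y} (w : u ≫ h = v ≫ h) : u = v := by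
  have : IsIso (Γ.K.map h) := hh
  refine Γ.eq_of_K_map_eq hA ?_
  rw [← cancel_mono (Γ.K.map h), ← Functor.map_comp, ← Functor.map_comp, w]

lemma isIso_of_isEquiv {A B : C} (hA : Γ.IsColocal A) (hB : Γ.IsColocal B)
    {g : A ⟶ B} (hg : Γ.IsEquiv g) : IsIso g := by
  have : IsIso (Γ.c.app A) := hA
  have : IsIso (Γ.c.app B) := hB
  have : IsIso (Γ.K.map g) := hg
  exact IsIso.of_isIso_fac_left (Γ.c.naturality g).symm

lemma isColocal_of_comp_c_eq_id {X : C} (s : X ⟶ Γ.K.obj X) (hs : s ≫ Γ.c.app X = 𝟙 X) :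
    Γ.IsColocal X :=
  ⟨s, Γ.eq_of_comp_eq_of_isEquiv (Γ.isColocal_K_obj X) (Γ.isEquiv_c_app X)
    (by simp [hs]), hs⟩

lemma exists_lift {A X : C} (hA : Γ.IsColocal A) (f : A ⟶ X) :
    ∃ f' : A ⟶ Γ.K.obj X, f' ≫ Γ.c.app X = f := by
  have : IsIso (Γ.c.app A) := hA
  exact ⟨inv (Γ.c.app A) ≫ Γ.K.map f, by simp⟩

lemma exists_counitLift {Y Z : C} {h : Y ⟶ Z} (hh : Γ.IsEquiv h) :
    ∃ k : Γ.K.obj Z ⟶ Y, k ≫ h = Γ.c.app Z ∧ Γ.IsEquiv k := by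
  have : IsIso (Γ.K.map h) := hh
  have hk : (inv (Γ.K.map h) ≫ Γ.c.app Y) ≫ h = Γ.c.app Z := by simp
  exact ⟨_, hk, Γ.isEquiv_of_fac hk hh (Γ.isEquiv_c_app Z)⟩

end ColocalizationData

section Comparison

open ColocalizationData

variable {C₁ C₂ : Type*} [Category C₁] [Category C₂] {F : C₁ ⥤ C₂}
  {Γ₁ : ColocalizationData C₁} {Γ₂ : ColocalizationData C₂}

lemma exists_alpha (hF : ∀ X : C₁, Γ₁.IsColocal X → Γ₂.IsColocal (F.obj X)) :
    ∃ α : Γ₁.K ⋙ F ⟶ F ⋙ Γ₂.K,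
      ∀ X : C₁, α.app X ≫ Γ₂.c.app (F.obj X) = F.map (Γ₁.c.app X) := by
  have hK : ∀ X : C₁, Γ₂.IsColocal (F.obj (Γ₁.K.obj X)) := fun X => hF _ (Γ₁.isColocal_K_obj X)
  have lifts : ∀ X : C₁, ∃ f : F.obj (Γ₁.K.obj X) ⟶ Γ₂.K.obj (F.obj X),
      f ≫ Γ₂.c.app (F.obj X) = F.map (Γ₁.c.app X) := fun X => Γ₂.exists_lift (hK X) _
  choose a ha using lifts
  refine ⟨{ app := a, naturality := fun X Y g => ?_ }, ha⟩
  refine Γ₂.eq_of_comp_eq_of_isEquiv (hK X) (Γ₂.isEquiv_c_app (F.obj Y)) ?_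
  calc (F.map (Γ₁.K.map g) ≫ a Y) ≫ Γ₂.c.app (F.obj Y)
      = F.map (Γ₁.K.map g) ≫ F.map (Γ₁.c.app Y) := by rw [Category.assoc, ha]
    _ = F.map (Γ₁.c.app X) ≫ F.map g := by
      rw [← F.map_comp, ← F.map_comp, Γ₁.c.naturality, Functor.id_map]
    _ = (a X ≫ Γ₂.K.map (F.map g)) ≫ Γ₂.c.app (F.obj Y) := by
      rw [Category.assoc, Γ₂.c.naturality, ← Category.assoc, ha, Functor.id_map]

lemma isColocal_map_of_alpha (α : Γ₁.K ⋙ F ⟶ F ⋙ Γ₂.K)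
    (hα : ∀ X : C₁, α.app X ≫ Γ₂.c.app (F.obj X) = F.map (Γ₁.c.app X))
    (X : C₁) (hX : Γ₁.IsColocal X) : Γ₂.IsColocal (F.obj X) := by
  have : IsIso (Γ₁.c.app X) := hX
  exact Γ₂.isColocal_of_comp_c_eq_id (inv (F.map (Γ₁.c.app X)) ≫ α.app X)
    (by rw [Category.assoc, hα, IsIso.inv_hom_id])

lemma alpha_unique (α α' : Γ₁.K ⋙ F ⟶ F ⋙ Γ₂.K)
    (hα : ∀ X : C₁, α.app X ≫ Γ₂.c.app (F.obj X) = F.map (Γ₁.c.app X))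
    (hα' : ∀ X : C₁, α'.app X ≫ Γ₂.c.app (F.obj X) = F.map (Γ₁.c.app X)) : α = α' := by
  ext X
  exact Γ₂.eq_of_comp_eq_of_isEquiv (isColocal_map_of_alpha α hα _ (Γ₁.isColocal_K_obj X))
    (Γ₂.isEquiv_c_app _) ((hα X).trans (hα' X).symm)

lemma isEquiv_map_of_isIso_alpha (α : Γ₁.K ⋙ F ⟶ F ⋙ Γ₂.K) [IsIso α]
    {X Y : C₁} (g : X ⟶ Y) (hg : Γ₁.IsEquiv g) : Γ₂.IsEquiv (F.map g) := by
  have : IsIso (Γ₁.K.map g) := hg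
  have hFK : Γ₂.IsEquiv (F.map (Γ₁.K.map g)) := Γ₂.isEquiv_of_isIso _
  exact (Γ₂.isEquiv_K_map_iff _).mp <| (Γ₂.isEquiv_iff_of_comm_sq (Γ₂.isEquiv_of_isIso _)
    (Γ₂.isEquiv_of_isIso _) (α.naturality g).symm).mp hFK

lemma isIso_alpha_of_isEquiv_map (α : Γ₁.K ⋙ F ⟶ F ⋙ Γ₂.K)
    (hα : ∀ X : C₁, α.app X ≫ Γ₂.c.app (F.obj X) = F.map (Γ₁.c.app X))
    (hF : ∀ ⦃X Y : C₁⦄ (g : X ⟶ Y), Γ₁.IsEquiv g → Γ₂.IsEquiv (F.map g)) : IsIso α := by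
  have : ∀ X : C₁, IsIso (α.app X) := fun X =>
    Γ₂.isIso_of_isEquiv (isColocal_map_of_alpha α hα _ (Γ₁.isColocal_K_obj X))
      (Γ₂.isColocal_K_obj _)
      (Γ₂.isEquiv_of_fac (hα X) (Γ₂.isEquiv_c_app _) (hF _ (Γ₁.isEquiv_c_app X)))
  exact NatIso.isIso_of_isIso_app α

lemma exists_beta (hF : ∀ ⦃X Y : C₁⦄ (g : X ⟶ Y), Γ₁.IsEquiv g → Γ₂.IsEquiv (F.map g)) :
    ∃ β : F ⋙ Γ₂.K ⟶ Γ₁.K ⋙ F,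
      (∀ X : C₁, β.app X ≫ F.map (Γ₁.c.app X) = Γ₂.c.app (F.obj X)) ∧
      ∀ X : C₁, Γ₂.IsEquiv (β.app X) := by
  have hc : ∀ X : C₁, Γ₂.IsEquiv (F.map (Γ₁.c.app X)) := fun X => hF _ (Γ₁.isEquiv_c_app X)
  have lifts : ∀ X : C₁, ∃ k : Γ₂.K.obj (F.obj X) ⟶ F.obj (Γ₁.K.obj X),
      k ≫ F.map (Γ₁.c.app X) = Γ₂.c.app (F.obj X) ∧ Γ₂.IsEquiv k :=
    fun X => Γ₂.exists_counitLift (hc X)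
  choose b hb hbe using lifts
  refine ⟨{ app := b, naturality := fun X Y g => ?_ }, hb, hbe⟩
  refine Γ₂.eq_of_comp_eq_of_isEquiv (Γ₂.isColocal_K_obj _) (hc Y) ?_
  calc (Γ₂.K.map (F.map g) ≫ b Y) ≫ F.map (Γ₁.c.app Y)
      = Γ₂.c.app (F.obj X) ≫ F.map g := by
        rw [Category.assoc, hb, Γ₂.c.naturality, Functor.id_map]
    _ = (b X ≫ F.map (Γ₁.K.map g)) ≫ F.map (Γ₁.c.app Y) := by
      rw [Category.assoc, ← F.map_comp, Γ₁.c.naturality, Functor.id_map, F.map_comp,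
        ← Category.assoc, hb]

lemma isEquiv_map_of_beta (β : F ⋙ Γ₂.K ⟶ Γ₁.K ⋙ F) (hβ : ∀ X : C₁, Γ₂.IsEquiv (β.app X))
    {X Y : C₁} (g : X ⟶ Y) (hg : Γ₁.IsEquiv g) : Γ₂.IsEquiv (F.map g) := by
  have : IsIso (Γ₁.K.map g) := hg
  have hFK : Γ₂.IsEquiv (F.map (Γ₁.K.map g)) := Γ₂.isEquiv_of_isIso _
  exact (Γ₂.isEquiv_K_map_iff _).mp <|
    (Γ₂.isEquiv_iff_of_comm_sq (hβ X) (hβ Y) (β.naturality g).symm).mpr hFK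

lemma beta_unique (β β' : F ⋙ Γ₂.K ⟶ Γ₁.K ⋙ F)
    (hβ : ∀ X : C₁, β.app X ≫ F.map (Γ₁.c.app X) = Γ₂.c.app (F.obj X))
    (hβe : ∀ X : C₁, Γ₂.IsEquiv (β.app X))
    (hβ' : ∀ X : C₁, β'.app X ≫ F.map (Γ₁.c.app X) = Γ₂.c.app (F.obj X)) : β = β' := by
  ext X
  exact Γ₂.eq_of_comp_eq_of_isEquiv (Γ₂.isColocal_K_obj _)
    (isEquiv_map_of_beta β hβe _ (Γ₁.isEquiv_c_app X)) ((hβ X).trans (hβ' X).symm)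

lemma isColocal_map_of_isIso_beta (β : F ⋙ Γ₂.K ⟶ Γ₁.K ⋙ F) [IsIso β]
    (hβ : ∀ X : C₁, β.app X ≫ F.map (Γ₁.c.app X) = Γ₂.c.app (F.obj X))
    (X : C₁) (hX : Γ₁.IsColocal X) : Γ₂.IsColocal (F.obj X) := by
  have : IsIso (Γ₁.c.app X) := hX
  rw [IsColocal, ← hβ X]
  infer_instance

lemma isIso_beta_of_isColocal_map (β : F ⋙ Γ₂.K ⟶ Γ₁.K ⋙ F)
    (hβ : ∀ X : C₁, Γ₂.IsEquiv (β.app X))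
    (hF : ∀ X : C₁, Γ₁.IsColocal X → Γ₂.IsColocal (F.obj X)) : IsIso β := by
  have : ∀ X : C₁, IsIso (β.app X) := fun X =>
    Γ₂.isIso_of_isEquiv (Γ₂.isColocal_K_obj _) (hF _ (Γ₁.isColocal_K_obj X)) (hβ X)
  exact NatIso.isIso_of_isIso_app β

end Comparison

/-- Dual comparison transformations for colocalizations: (i) `F` preserves
colocal objects iff there is a (unique) natural transformation `α : F ∘ C₁' ⟶ C₂' ∘ F` with
`(c₂)_{F X} ∘ α_X = F((c₁)_X)`, and such `α` is an isomorphism iff `F` preserves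
equivalences; (ii) `F` preserves equivalences iff there is a (unique) natural transformation
`β : C₂' ∘ F ⟶ F ∘ C₁'` with `F((c₁)_X) ∘ β_X = (c₂)_{F X}` whose components are
`C₂'`-equivalences, and such `β` is an isomorphism iff `F` preserves colocal objects. -/
theorem colocalization_comparison_transformations
    {C₁ C₂ : Type*} [Category C₁] [Category C₂] (F : C₁ ⥤ C₂)
    (Γ₁ : ColocalizationData C₁) (Γ₂ : ColocalizationData C₂) :
    -- (i)
    (((∀ X : C₁, Γ₁.IsColocal X → Γ₂.IsColocal (F.obj X)) ↔
        ∃ α : Γ₁.K ⋙ F ⟶ F ⋙ Γ₂.K,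
          ∀ X : C₁, α.app X ≫ Γ₂.c.app (F.obj X) = F.map (Γ₁.c.app X)) ∧
      (∀ α α' : Γ₁.K ⋙ F ⟶ F ⋙ Γ₂.K,
        (∀ X : C₁, α.app X ≫ Γ₂.c.app (F.obj X) = F.map (Γ₁.c.app X)) →
        (∀ X : C₁, α'.app X ≫ Γ₂.c.app (F.obj X) = F.map (Γ₁.c.app X)) → α = α') ∧
      (∀ α : Γ₁.K ⋙ F ⟶ F ⋙ Γ₂.K,
        (∀ X : C₁, α.app X ≫ Γ₂.c.app (F.obj X) = F.map (Γ₁.c.app X)) →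
        (IsIso α ↔ ∀ ⦃X Y : C₁⦄ (g : X ⟶ Y), Γ₁.IsEquiv g → Γ₂.IsEquiv (F.map g)))) ∧
    -- (ii)
    (((∀ ⦃X Y : C₁⦄ (g : X ⟶ Y), Γ₁.IsEquiv g → Γ₂.IsEquiv (F.map g)) ↔
        ∃ β : F ⋙ Γ₂.K ⟶ Γ₁.K ⋙ F,
          (∀ X : C₁, β.app X ≫ F.map (Γ₁.c.app X) = Γ₂.c.app (F.obj X)) ∧
          ∀ X : C₁, Γ₂.IsEquiv (β.app X)) ∧
      (∀ β β' : F ⋙ Γ₂.K ⟶ Γ₁.K ⋙ F,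
        ((∀ X : C₁, β.app X ≫ F.map (Γ₁.c.app X) = Γ₂.c.app (F.obj X)) ∧
          ∀ X : C₁, Γ₂.IsEquiv (β.app X)) →
        ((∀ X : C₁, β'.app X ≫ F.map (Γ₁.c.app X) = Γ₂.c.app (F.obj X)) ∧
          ∀ X : C₁, Γ₂.IsEquiv (β'.app X)) → β = β') ∧
      (∀ β : F ⋙ Γ₂.K ⟶ Γ₁.K ⋙ F,
        ((∀ X : C₁, β.app X ≫ F.map (Γ₁.c.app X) = Γ₂.c.app (F.obj X)) ∧
          ∀ X : C₁, Γ₂.IsEquiv (β.app X)) →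
        (IsIso β ↔ ∀ X : C₁, Γ₁.IsColocal X → Γ₂.IsColocal (F.obj X)))) := by
  refine ⟨⟨⟨exists_alpha, fun ⟨α, hα⟩ => isColocal_map_of_alpha α hα⟩, alpha_unique,
      fun α hα => ⟨fun _ _ _ => isEquiv_map_of_isIso_alpha α, isIso_alpha_of_isEquiv_map α hα⟩⟩,
    ⟨⟨exists_beta, fun ⟨β, _, hβ⟩ _ _ => isEquiv_map_of_beta β hβ⟩,
      fun β β' ⟨hβ, hβe⟩ ⟨hβ', _⟩ => beta_unique β β' hβ hβe hβ',
      fun β ⟨hβ, hβe⟩ => ⟨fun _ => isColocal_map_of_isIso_beta β hβ,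
        isIso_beta_of_isColocal_map β hβe⟩⟩⟩
end

section
/- Let F : C₁ ⇄ C₂ : G be an adjunction and let A be an object of C₁. Then: (i) a morphism g in C₂ is an FA-equivalence if and only if Gg is an A-equivalence; (ii) F sends A-cellular objects to FA-cellular objects; (iii) if an A-cellularization functor (C_A, c) on C₁ and an FA-cellularization functor (C_{FA}, c') on C₂ exist, then there is a unique natural transformation α : F ∘ C_A → C_{FA} ∘ F with c'_{FX} ∘ α_X = F(c_X) for all X, and a unique natural transformation β : C_A ∘ G → G ∘ C_{FA} with G(c'_Y) ∘ β_Y = c_{GY} for all Y whose components are A-equivalences; moreover α is a natural isomorphism if and only if F sends A-equivalences to FA-equivalences, and β is a natural isomorphism if and only if G sends FA-cellular objects to A-cellular objects. -/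
open CategoryTheory

/-- A morphism `g : U ⟶ V` is an `A`-(cellular) equivalence if postcomposition with `g`
gives a bijection `C(A, U) → C(A, V)`. -/
def IsCellEquiv {C : Type*} [Category C] (A : C) {U V : C} (g : U ⟶ V) : Prop :=
  Function.Bijective (fun h : A ⟶ U => h ≫ g)

/-- An object `X` is `A`-cellular if it is co-orthogonal to every `A`-equivalence. -/
def IsCellular {C : Type*} [Category C] (A X : C) : Prop :=
  ∀ ⦃U V : C⦄ (g : U ⟶ V), IsCellEquiv A g → Function.Bijective (fun h : X ⟶ U => h ≫ g)

/-- An `A`-cellularization functor: a colocalization whose colocal objects (those `X` with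
`c_X` an isomorphism) are exactly the `A`-cellular objects, and whose counit components are
`A`-equivalences. -/
structure Cellularization {C : Type*} [Category C] (A : C)
    extends ColocalizationData C where
  colocal_iff : ∀ X : C, IsIso (c.app X) ↔ IsCellular A X
  counit_isEquiv : ∀ X : C, IsCellEquiv A (c.app X)

/-!
Through the adjunction, `C₂(F X, -)` is `C₁(X, G -)`, so co-orthogonality of `F X` to `g` is
co-orthogonality of `X` to `G g`; with `X = A` this is (i), and (ii) follows. Both comparison maps
are lifts, through a transformation whose components are cellular equivalences, of a
transformation out of a functor with cellular values, so they exist and are unique. A cellular equivalence between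
cellular objects is an isomorphism, and `g` is an `A`-equivalence exactly when `C_A g` is an
isomorphism; the two isomorphism criteria follow from these facts.
-/

namespace IsCellEquiv

variable {C : Type*} [Category C] {T U V W : C} {f : U ⟶ V} {g : V ⟶ W}

lemma postcomp_comp_eq (f : U ⟶ V) (g : V ⟶ W) :
    (fun h : T ⟶ U => h ≫ f ≫ g) = (fun h : T ⟶ V => h ≫ g) ∘ (fun h : T ⟶ U => h ≫ f) := by
  funext h
  simp

lemma comp (hf : IsCellEquiv T f) (hg : IsCellEquiv T g) : IsCellEquiv T (f ≫ g) := by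
  unfold IsCellEquiv
  rw [postcomp_comp_eq]
  exact Function.Bijective.comp hg hf

lemma of_postcomp (hfg : IsCellEquiv T (f ≫ g)) (hg : IsCellEquiv T g) : IsCellEquiv T f := by
  unfold IsCellEquiv at hfg
  rwa [postcomp_comp_eq, Function.Bijective.of_comp_iff' hg] at hfg

lemma of_precomp (hfg : IsCellEquiv T (f ≫ g)) (hf : IsCellEquiv T f) : IsCellEquiv T g := by
  unfold IsCellEquiv at hfg
  rwa [postcomp_comp_eq, Function.Bijective.of_comp_iff _ hf] at hfg

lemma of_isIso (f : U ⟶ V) [IsIso f] : IsCellEquiv T f :=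
  ⟨fun a b h => by simpa using h =≫ inv f, fun k => ⟨k ≫ inv f, by simp⟩⟩

lemma isIso (hU : IsCellEquiv U f) (hV : IsCellEquiv V f) : IsIso f := by
  obtain ⟨s, hs⟩ := hV.surjective (𝟙 V)
  refine ⟨s, hU.injective ?_, hs⟩
  simp only [Category.assoc, hs, Category.comp_id, Category.id_comp]

lemma isIso_of_isCellular {A : C} (hf : IsCellEquiv A f) (hU : IsCellular A U)
    (hV : IsCellular A V) : IsIso f :=
  isIso (hU f hf) (hV f hf)

end IsCellEquiv

lemma existsUnique_natTrans_lift_of_isCellular {C D : Type*} [Category C] [Category D] {A : C}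
    {H M L : D ⥤ C} (ε : M ⟶ L) (hε : ∀ X, IsCellEquiv A (ε.app X)) (τ : H ⟶ L)
    (hH : ∀ X, IsCellular A (H.obj X)) :
    ∃! σ : H ⟶ M, ∀ X, σ.app X ≫ ε.app X = τ.app X := by
  have hbij X Y : IsCellEquiv (H.obj X) (ε.app Y) := hH X _ (hε Y)
  choose σ hσ using fun X => (hbij X X).surjective (τ.app X)
  refine ⟨{ app := σ, naturality := fun X Y f => ?_ }, hσ, ?_⟩
  · apply (hbij X Y).injective
    simp only [Category.assoc, hσ, ε.naturality, τ.naturality]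
    simp only [← Category.assoc, hσ]
  · intro σ' hσ'
    ext X
    exact (hbij X X).injective ((hσ' X).trans (hσ X).symm)

namespace CategoryTheory.Adjunction

variable {C₁ C₂ : Type*} [Category C₁] [Category C₂] {F : C₁ ⥤ C₂} {G : C₂ ⥤ C₁}

lemma isCellEquiv_iff (adj : F ⊣ G) (X : C₁) {U V : C₂} (g : U ⟶ V) :
    IsCellEquiv (F.obj X) g ↔ IsCellEquiv X (G.map g) := by
  have hnat : (fun h : X ⟶ G.obj U => h ≫ G.map g) ∘ adj.homEquiv X U =
      adj.homEquiv X V ∘ (fun h : F.obj X ⟶ U => h ≫ g) := by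
    funext h
    exact (adj.homEquiv_naturality_right h g).symm
  unfold IsCellEquiv
  rw [← EquivLike.bijective_comp (adj.homEquiv X U), hnat, EquivLike.comp_bijective]

lemma isCellular_obj (adj : F ⊣ G) {A X : C₁} (hX : IsCellular A X) :
    IsCellular (F.obj A) (F.obj X) := fun _ _ g hg =>
  (adj.isCellEquiv_iff X g).2 (hX _ ((adj.isCellEquiv_iff A g).1 hg))

end CategoryTheory.Adjunction

namespace Cellularization

variable {C : Type*} [Category C] {A : C} (CA : Cellularization A)

lemma isCellular_obj (X : C) : IsCellular A (CA.K.obj X) := by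
  rw [← CA.colocal_iff, ← CA.coincide]
  exact CA.isIso X

lemma c_naturality {U V : C} (g : U ⟶ V) : CA.K.map g ≫ CA.c.app V = CA.c.app U ≫ g :=
  CA.c.naturality g

lemma isCellEquiv_iff_isIso_map {U V : C} (g : U ⟶ V) :
    IsCellEquiv A g ↔ IsIso (CA.K.map g) := by
  constructor
  · intro hg
    have hKg : IsCellEquiv A (CA.K.map g ≫ CA.c.app V) := by
      rw [c_naturality]
      exact (CA.counit_isEquiv U).comp hg
    exact (hKg.of_postcomp (CA.counit_isEquiv V)).isIso_of_isCellular
      (CA.isCellular_obj U) (CA.isCellular_obj V)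
  · intro _
    have hcg : IsCellEquiv A (CA.c.app U ≫ g) := by
      rw [← c_naturality]
      exact (IsCellEquiv.of_isIso _).comp (CA.counit_isEquiv V)
    exact hcg.of_precomp (CA.counit_isEquiv U)

end Cellularization

section Comparison

variable {C₁ C₂ : Type*} [Category C₁] [Category C₂] {A : C₁} {B : C₂}
  (CA : Cellularization A) (CB : Cellularization B)

lemma isIso_comparison_left_iff {F : C₁ ⥤ C₂}
    (hF : ∀ X, IsCellular A X → IsCellular B (F.obj X)) (α : CA.K ⋙ F ⟶ F ⋙ CB.K)
    (hα : ∀ X, α.app X ≫ CB.c.app (F.obj X) = F.map (CA.c.app X)) :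
    IsIso α ↔ ∀ ⦃U V : C₁⦄ (g : U ⟶ V), IsCellEquiv A g → IsCellEquiv B (F.map g) := by
  constructor
  · intro _ U V g hg
    have : IsIso (CA.K.map g) := (CA.isCellEquiv_iff_isIso_map g).1 hg
    have hFKg : IsIso ((CA.K ⋙ F).map g) := Functor.map_isIso F _
    rw [NatIso.isIso_map_iff (asIso α)] at hFKg
    exact (CB.isCellEquiv_iff_isIso_map _).2 hFKg
  · intro hFequiv
    have hαequiv X : IsCellEquiv B (α.app X) := by
      refine IsCellEquiv.of_postcomp ?_ (CB.counit_isEquiv (F.obj X))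
      rw [hα X]
      exact hFequiv _ (CA.counit_isEquiv X)
    have (X : C₁) : IsIso (α.app X) := (hαequiv X).isIso_of_isCellular
      (hF _ (CA.isCellular_obj X)) (CB.isCellular_obj _)
    exact NatIso.isIso_of_isIso_app α

lemma isCellEquiv_comparison_right_app {G : C₂ ⥤ C₁}
    (hG : ∀ ⦃U V : C₂⦄ (g : U ⟶ V), IsCellEquiv B g → IsCellEquiv A (G.map g))
    {β : G ⋙ CA.K ⟶ CB.K ⋙ G} (hβ : ∀ Y, β.app Y ≫ G.map (CB.c.app Y) = CA.c.app (G.obj Y))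
    (Y : C₂) : IsCellEquiv A (β.app Y) := by
  refine IsCellEquiv.of_postcomp ?_ (hG _ (CB.counit_isEquiv Y))
  rw [hβ Y]
  exact CA.counit_isEquiv _

lemma isIso_comparison_right_iff {G : C₂ ⥤ C₁}
    (hG : ∀ ⦃U V : C₂⦄ (g : U ⟶ V), IsCellEquiv B g → IsCellEquiv A (G.map g))
    (β : G ⋙ CA.K ⟶ CB.K ⋙ G) (hβ : ∀ Y, β.app Y ≫ G.map (CB.c.app Y) = CA.c.app (G.obj Y)) :
    IsIso β ↔ ∀ Y, IsCellular B Y → IsCellular A (G.obj Y) := by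
  constructor
  · intro _ Y hY
    have : IsIso (CB.c.app Y) := (CB.colocal_iff Y).2 hY
    rw [← CA.colocal_iff, ← hβ Y]
    infer_instance
  · intro hGcell
    have (Y : C₂) : IsIso (β.app Y) :=
      (isCellEquiv_comparison_right_app CA CB hG hβ Y).isIso_of_isCellular
        (CA.isCellular_obj _) (hGcell _ (CB.isCellular_obj Y))
    exact NatIso.isIso_of_isIso_app β

end Comparison

/-- For an adjunction `F ⊣ G` and an object `A` of `C₁`: (i) `g` is an
`F A`-equivalence iff `G g` is an `A`-equivalence; (ii) `F` sends `A`-cellular objects to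
`F A`-cellular objects; (iii) given cellularizations `C_A` and `C_{F A}`, there are unique
comparison transformations `α : F ∘ C_A ⟶ C_{F A} ∘ F` and `β : C_A ∘ G ⟶ G ∘ C_{F A}` (the
latter with `A`-equivalence components), `α` being an isomorphism iff `F` preserves cellular
equivalences, and `β` being an isomorphism iff `G` preserves cellular objects. -/
theorem cellularization_comparison_for_adjunction
    {C₁ C₂ : Type*} [Category C₁] [Category C₂]
    (F : C₁ ⥤ C₂) (G : C₂ ⥤ C₁) (adj : F ⊣ G) (A : C₁) :
    -- (i)
    (∀ ⦃U V : C₂⦄ (g : U ⟶ V), IsCellEquiv (F.obj A) g ↔ IsCellEquiv A (G.map g)) ∧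
    -- (ii)
    (∀ X : C₁, IsCellular A X → IsCellular (F.obj A) (F.obj X)) ∧
    -- (iii)
    (∀ (CA : Cellularization A) (CFA : Cellularization (F.obj A)),
      (∃ α : CA.K ⋙ F ⟶ F ⋙ CFA.K,
        (∀ X : C₁, α.app X ≫ CFA.c.app (F.obj X) = F.map (CA.c.app X)) ∧
        ∀ α' : CA.K ⋙ F ⟶ F ⋙ CFA.K,
          (∀ X : C₁, α'.app X ≫ CFA.c.app (F.obj X) = F.map (CA.c.app X)) → α' = α) ∧
      (∃ β : G ⋙ CA.K ⟶ CFA.K ⋙ G,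
        (∀ Y : C₂, β.app Y ≫ G.map (CFA.c.app Y) = CA.c.app (G.obj Y)) ∧
        (∀ Y : C₂, IsCellEquiv A (β.app Y)) ∧
        ∀ β' : G ⋙ CA.K ⟶ CFA.K ⋙ G,
          ((∀ Y : C₂, β'.app Y ≫ G.map (CFA.c.app Y) = CA.c.app (G.obj Y)) ∧
            ∀ Y : C₂, IsCellEquiv A (β'.app Y)) → β' = β) ∧
      (∀ α : CA.K ⋙ F ⟶ F ⋙ CFA.K,
        (∀ X : C₁, α.app X ≫ CFA.c.app (F.obj X) = F.map (CA.c.app X)) →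
        (IsIso α ↔ ∀ ⦃U V : C₁⦄ (g : U ⟶ V),
          IsCellEquiv A g → IsCellEquiv (F.obj A) (F.map g))) ∧
      (∀ β : G ⋙ CA.K ⟶ CFA.K ⋙ G,
        (∀ Y : C₂, β.app Y ≫ G.map (CFA.c.app Y) = CA.c.app (G.obj Y)) →
        (IsIso β ↔ ∀ Y : C₂, IsCellular (F.obj A) Y → IsCellular A (G.obj Y)))) := by
  have hequiv : ∀ ⦃U V : C₂⦄ (g : U ⟶ V), IsCellEquiv (F.obj A) g ↔ IsCellEquiv A (G.map g) :=
    fun _ _ g => adj.isCellEquiv_iff A g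
  have hcell (X : C₁) (hX : IsCellular A X) : IsCellular (F.obj A) (F.obj X) :=
    adj.isCellular_obj hX
  refine ⟨hequiv, hcell, fun CA CFA => ⟨?_, ?_, isIso_comparison_left_iff CA CFA hcell,
    isIso_comparison_right_iff CA CFA fun _ _ g => (hequiv g).1⟩⟩
  · exact existsUnique_natTrans_lift_of_isCellular (L := F) (Functor.whiskerLeft F CFA.c)
      (fun _ => CFA.counit_isEquiv _) (Functor.whiskerRight CA.c F)
      (fun X => hcell _ (CA.isCellular_obj X))
  · obtain ⟨β, hβ, huniq⟩ := existsUnique_natTrans_lift_of_isCellular (L := G)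
      (Functor.whiskerRight CFA.c G) (fun Y => (hequiv _).1 (CFA.counit_isEquiv Y))
      (Functor.whiskerLeft G CA.c) (fun _ => CA.isCellular_obj _)
    exact ⟨β, hβ, isCellEquiv_comparison_right_app CA CFA (fun _ _ g => (hequiv g).1) hβ,
      fun β' hβ' => huniq β' hβ'.1⟩
end
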